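/- Let N, K be positive natural numbers, η > 0, let H_S^(r) be an N×N complex Hermitian matrix, and let g_j > 0, γ_j > 0, ε_j ∈ ℝ for j = 1,…,K. Let H_eff^η be the (K+1)N × (K+1)N block matrix whose (0,0) block is (1 + iη/2)^{−1} H_S^(r), whose (0,j) block is (1 + iη/2)^{−1} g_j I_N, whose (j,0) block is g_j I_N, whose (j,j) block is (ε_j − i γ_j/2) I_N for j = 1,…,K, and whose remaining blocks are zero. Then the optical potential V = (i/2)(H_eff^η − (H_eff^η)†) is positive semidefinite if and only if H_S^(r) − (η/4)(Σ_{j=1}^K g_j²/γ_j) I_N is positive semidefinite, i.e. if and only if every eigenvalue E_α of H_S^(r) satisfies E_α ≥ (η/4) Σ_{j=1}^K g_j²/γ_j. -/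

import Mathlib

open Matrix
open scoped ComplexOrder

/-!
The optical potential of `H_eff^η` is the block matrix with diagonal blocks `s • H_S^(r)`,
where `s = (η/2)|1 + iη/2|⁻²`, and `(γ_j/2) I_N`, and off-diagonal blocks
`(η/4)(1 + iη/2)⁻¹ g_j I_N`; the key identity is `(i/2)((1 + iη/2)⁻¹ - 1) = (η/4)(1 + iη/2)⁻¹`.
The damping block is positive definite, so `V ⪰ 0` iff its Schur complement is, and that
complement is `s • (H_S^(r) - (η/4)(Σ_j g_j²/γ_j) I_N)`, since `2 · |(η/4)(1 + iη/2)⁻¹|² = s · η/4`.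
Dividing by `s > 0` and diagonalising `H_S^(r)` gives both forms of the condition.
-/

/-- The effective non-Hermitian Hamiltonian `H_eff^η` with renormalized Ohmic contribution:
the `(K+1)N × (K+1)N` block matrix whose `(0,0)` block is `(1 + iη/2)⁻¹ H_S^(r)`, whose
`(0,j)` block is `(1 + iη/2)⁻¹ g_j I_N`, whose `(j,0)` block is `g_j I_N`, whose `(j,j)`
block is `(ε_j − i γ_j/2) I_N`, and whose remaining blocks are zero. -/
noncomputable def HeffEta (N K : ℕ) (η : ℝ) (HS : Matrix (Fin N) (Fin N) ℂ)
    (g γ ε : Fin K → ℝ) :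
    Matrix (Fin N ⊕ Fin K × Fin N) (Fin N ⊕ Fin K × Fin N) ℂ :=
  Matrix.fromBlocks ((1 + Complex.I * (η : ℂ) / 2)⁻¹ • HS)
    (fun a p => if a = p.2 then (1 + Complex.I * (η : ℂ) / 2)⁻¹ * (g p.1 : ℂ) else 0)
    (fun p a => if p.2 = a then (g p.1 : ℂ) else 0)
    (fun p q => if p = q then (ε p.1 : ℂ) - Complex.I * ((γ p.1 : ℂ) / 2) else 0)

open Complex

namespace Matrix

section RCLike

variable {n 𝕜 : Type*} [RCLike 𝕜]

lemma posSemidef_smul_iff {c : ℝ} (hc : 0 < c) {A : Matrix n n 𝕜} :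
    (c • A).PosSemidef ↔ A.PosSemidef :=
  ⟨fun h => by simpa [smul_smul, hc.ne'] using h.smul (inv_nonneg.2 hc.le), fun h => h.smul hc.le⟩

lemma IsHermitian.posSemidef_sub_smul_one_iff [Fintype n] [DecidableEq n] {A : Matrix n n 𝕜}
    (hA : A.IsHermitian) (r : ℝ) :
    (A - (r : 𝕜) • (1 : Matrix n n 𝕜)).PosSemidef ↔ ∀ i, r ≤ hA.eigenvalues i := by
  have hshift : A - (r : 𝕜) • (1 : Matrix n n 𝕜) =
      Unitary.conjStarAlgAut 𝕜 _ hA.eigenvectorUnitary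
        (diagonal fun i => ((hA.eigenvalues i - r : ℝ) : 𝕜)) := by
    conv_lhs => rw [hA.spectral_theorem]
    rw [← Algebra.algebraMap_eq_smul_one, ← AlgEquivClass.commutes
      (Unitary.conjStarAlgAut 𝕜 _ hA.eigenvectorUnitary) (r : 𝕜), ← map_sub]
    congr 1
    ext i j
    by_cases h : i = j <;> simp [h, algebraMap_eq_diagonal]
  rw [hshift]
  simp [Unitary.conjStarAlgAut_apply, Unitary.isUnit_coe.posSemidef_star_right_conjugate_iff,
    posSemidef_diagonal_iff]

end RCLike

lemma inv_diagonal_of_ne_zero {n K : Type*} [Fintype n] [DecidableEq n] [Field K] {v : n → K}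
    (hv : ∀ i, v i ≠ 0) : (diagonal v)⁻¹ = diagonal fun i => (v i)⁻¹ := by
  refine inv_eq_right_inv ?_
  rw [diagonal_mul_diagonal, ← diagonal_one]
  congr 1
  funext i
  exact mul_inv_cancel₀ (hv i)

section Coupling

variable {ι n R : Type*} [DecidableEq n]

/-- The block row `(c j • 1)_{j : ι}` of scalar multiples of the `n × n` identity. -/
def couplingBlock [Zero R] (c : ι → R) : Matrix n (ι × n) R :=
  of fun a p => if a = p.2 then c p.1 else 0

@[simp] lemma couplingBlock_apply [Zero R] (c : ι → R) (a : n) (p : ι × n) :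
    couplingBlock c a p = if a = p.2 then c p.1 else 0 := rfl

lemma couplingBlock_sub [AddGroup R] (c c' : ι → R) :
    couplingBlock (n := n) (c - c') = couplingBlock c - couplingBlock c' := by
  ext a p; by_cases h : a = p.2 <;> simp [h]

lemma couplingBlock_smul {S : Type*} [Zero R] [SMulZeroClass S R] (z : S) (c : ι → R) :
    couplingBlock (n := n) (z • c) = z • couplingBlock c := by
  ext a p; by_cases h : a = p.2 <;> simp [h]

lemma couplingBlock_mul_diagonal_mul_conjTranspose [DecidableEq ι] [Fintype ι] [Fintype n]
    [Semiring R] [StarRing R] (c c' d : ι → R) :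
    couplingBlock (n := n) c * diagonal (fun p : ι × n => d p.1) * (couplingBlock (n := n) c')ᴴ =
      (∑ j, c j * d j * star (c' j)) • (1 : Matrix n n R) := by
  ext a b
  rw [mul_apply, Fintype.sum_prod_type_right, Finset.sum_eq_single a]
  · by_cases h : a = b
    · simp [mul_diagonal, h]
    · simp [mul_diagonal, h, Ne.symm h]
  · intro m _ hm
    simp [mul_diagonal, Ne.symm hm]
  · simp

end Coupling

end Matrix

namespace Complex

lemma I_div_two_mul_sub_conj (z : ℂ) : I / 2 * (z - starRingEnd ℂ z) = -z.im := by
  rw [sub_conj]; push_cast; ring_nf; rw [I_sq]; ring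

lemma one_add_I_mul_div_two_ne_zero (x : ℝ) : 1 + I * x / 2 ≠ 0 :=
  fun h => by simpa using congrArg re h

lemma I_div_two_mul_inv_one_add_I_mul_sub_one (x : ℝ) :
    I / 2 * ((1 + I * x / 2)⁻¹ - 1) = x / 4 * (1 + I * x / 2)⁻¹ := by
  calc I / 2 * ((1 + I * x / 2)⁻¹ - 1)
        = I / 2 * (1 - (1 + I * x / 2)) * (1 + I * x / 2)⁻¹ := by
        rw [mul_assoc, sub_mul, one_mul, mul_inv_cancel₀ (one_add_I_mul_div_two_ne_zero x)]
    _ = x / 4 * (1 + I * x / 2)⁻¹ := by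
        ring_nf; rw [I_sq]; ring

lemma neg_im_inv_one_add_I_mul (x : ℝ) :
    -(1 + I * x / 2)⁻¹.im = x / 2 * normSq (1 + I * x / 2)⁻¹ := by
  simp [inv_im]; ring

lemma sum_mul_inv_half_mul_star {ι : Type*} [Fintype ι] (c : ℂ) (g γ : ι → ℝ)
    (hγ : ∀ j, γ j ≠ 0) :
    ∑ j, c * g j * ((γ j / 2 : ℝ) : ℂ)⁻¹ * star (c * g j) =
      ((2 * normSq c * ∑ j, g j ^ 2 / γ j : ℝ) : ℂ) := by
  push_cast
  rw [Finset.mul_sum]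
  refine Finset.sum_congr rfl fun j _ => ?_
  have hγj : (γ j : ℂ) ≠ 0 := ofReal_ne_zero.2 (hγ j)
  calc c * g j * ((γ j : ℂ) / 2)⁻¹ * star (c * g j)
        = 2 * (c * starRingEnd ℂ c) * g j ^ 2 / γ j := by
        simp only [star_mul', star_def, conj_ofReal]; field_simp
    _ = 2 * normSq c * (g j ^ 2 / γ j) := by rw [mul_conj]; ring

end Complex

section OpticalPotential

variable {m n : Type*}

noncomputable def opticalPotential (H : Matrix n n ℂ) : Matrix n n ℂ := (I / 2) • (H - Hᴴ)

lemma opticalPotential_fromBlocks (A : Matrix m m ℂ) (B : Matrix m n ℂ) (C : Matrix n m ℂ)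
    (D : Matrix n n ℂ) :
    opticalPotential (fromBlocks A B C D) = fromBlocks (opticalPotential A)
      ((I / 2) • (B - Cᴴ)) ((I / 2) • (B - Cᴴ))ᴴ (opticalPotential D) := by
  have hstar : star (I / 2) = -(I / 2) := by simp [neg_div]
  simp only [opticalPotential, fromBlocks_conjTranspose, sub_eq_add_neg, fromBlocks_neg,
    fromBlocks_add, fromBlocks_smul, conjTranspose_smul, conjTranspose_add, conjTranspose_neg,
    conjTranspose_conjTranspose, hstar, neg_smul, ← smul_neg, neg_add, neg_neg, add_comm]

lemma Matrix.IsHermitian.opticalPotential_smul {A : Matrix n n ℂ} (hA : A.IsHermitian) (z : ℂ) :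
    opticalPotential (z • A) = (-z.im) • A := by
  rw [opticalPotential, conjTranspose_smul, hA.eq, ← sub_smul, smul_smul, star_def,
    I_div_two_mul_sub_conj, ← ofReal_neg, ← coe_smul]

lemma opticalPotential_diagonal [DecidableEq n] (d : n → ℂ) :
    opticalPotential (diagonal d) = diagonal fun i => ((-(d i).im : ℝ) : ℂ) := by
  ext i j
  by_cases h : i = j
  · subst h; simpa [opticalPotential] using I_div_two_mul_sub_conj (d i)
  · simp [opticalPotential, h]

end OpticalPotential

lemma heffEta_eq_fromBlocks (N K : ℕ) (η : ℝ) (HS : Matrix (Fin N) (Fin N) ℂ)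
    (g γ ε : Fin K → ℝ) :
    HeffEta N K η HS g γ ε = fromBlocks ((1 + I * η / 2)⁻¹ • HS)
      (couplingBlock ((1 + I * η / 2)⁻¹ • fun j => (g j : ℂ)))
      (couplingBlock fun j => (g j : ℂ))ᴴ
      (diagonal fun p => (ε p.1 : ℂ) - I * ((γ p.1 : ℂ) / 2)) := by
  rw [HeffEta]
  congr 1
  ext p a
  by_cases h : a = p.2
  · simp [h]
  · simp [h, Ne.symm h]

lemma opticalPotential_heffEta {N K : ℕ} {η : ℝ} {HS : Matrix (Fin N) (Fin N) ℂ}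
    (hHS : HS.IsHermitian) (g γ ε : Fin K → ℝ) :
    opticalPotential (HeffEta N K η HS g γ ε) = fromBlocks
      ((η / 2 * normSq (1 + I * η / 2)⁻¹) • HS)
      (couplingBlock ((η / 4 * (1 + I * η / 2)⁻¹) • fun j => (g j : ℂ)))
      (couplingBlock ((η / 4 * (1 + I * η / 2)⁻¹) • fun j => (g j : ℂ)))ᴴ
      (diagonal fun p => ((γ p.1 / 2 : ℝ) : ℂ)) := by
  rw [heffEta_eq_fromBlocks, opticalPotential_fromBlocks, hHS.opticalPotential_smul,
    opticalPotential_diagonal, neg_im_inv_one_add_I_mul, conjTranspose_conjTranspose,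
    ← couplingBlock_sub, ← couplingBlock_smul]
  have hcoupling : (I / 2) • (((1 + I * η / 2)⁻¹ • fun j => (g j : ℂ)) - fun j => (g j : ℂ)) =
      (η / 4 * (1 + I * η / 2)⁻¹) • fun j => (g j : ℂ) := by
    rw [← I_div_two_mul_inv_one_add_I_mul_sub_one, ← smul_smul, sub_smul, one_smul]
  have hdamping :
      (fun p : Fin K × Fin N => ((-((ε p.1 : ℂ) - I * ((γ p.1 : ℂ) / 2)).im : ℝ) : ℂ)) =
        fun p => ((γ p.1 / 2 : ℝ) : ℂ) := by
    funext p
    simp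
  rw [hcoupling, hdamping]

theorem markovian_dilation_condition_ohmic_plus_lorentz_general
    (N K : ℕ) (η : ℝ) (hη : 0 < η)
    (HS : Matrix (Fin N) (Fin N) ℂ) (hHS : HS.IsHermitian)
    (g γ ε : Fin K → ℝ) (hγ : ∀ j, 0 < γ j)
    (V : Matrix (Fin N ⊕ Fin K × Fin N) (Fin N ⊕ Fin K × Fin N) ℂ)
    (hV : V = (Complex.I / 2) • (HeffEta N K η HS g γ ε - (HeffEta N K η HS g γ ε)ᴴ)) :
    (V.PosSemidef ↔
      (HS - (((η / 4) * ∑ j, (g j) ^ 2 / (γ j) : ℝ) : ℂ) •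
        (1 : Matrix (Fin N) (Fin N) ℂ)).PosSemidef) ∧
    (V.PosSemidef ↔
      ∀ α : Fin N, (η / 4) * ∑ j, (g j) ^ 2 / (γ j) ≤ hHS.eigenvalues α) := by
  obtain rfl : V = opticalPotential (HeffEta N K η HS g γ ε) := hV
  set u : ℂ := (1 + I * η / 2)⁻¹
  set s : ℝ := η / 2 * normSq u
  set r : ℝ := η / 4 * ∑ j, g j ^ 2 / γ j
  have hs : 0 < s :=
    mul_pos (half_pos hη) (normSq_pos.2 (inv_ne_zero (one_add_I_mul_div_two_ne_zero η)))
  have hdamping_pos : ∀ p : Fin K × Fin N, (0 : ℂ) < ((γ p.1 / 2 : ℝ) : ℂ) := fun p =>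
    zero_lt_real.2 (half_pos (hγ p.1))
  have hD := posDef_diagonal_iff.2 hdamping_pos
  have := hD.isUnit.invertible
  have hSchur : s • HS - couplingBlock (n := Fin N) ((η / 4 * u) • fun j => (g j : ℂ)) *
      (diagonal fun p : Fin K × Fin N => ((γ p.1 / 2 : ℝ) : ℂ))⁻¹ *
      (couplingBlock (n := Fin N) ((η / 4 * u) • fun j => (g j : ℂ)))ᴴ =
      s • (HS - (r : ℂ) • 1) := by
    have hsr : 2 * normSq (η / 4 * u) * ∑ j, g j ^ 2 / γ j = s * r := by
      simp only [s, r, normSq_mul, normSq_div, normSq_ofReal, normSq_ofNat]; ring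
    rw [inv_diagonal_of_ne_zero fun p => (hdamping_pos p).ne',
      couplingBlock_mul_diagonal_mul_conjTranspose (n := Fin N) _ _
        fun j => ((γ j / 2 : ℝ) : ℂ)⁻¹]
    simp only [Pi.smul_apply, smul_eq_mul]
    rw [sum_mul_inv_half_mul_star _ _ _ fun j => (hγ j).ne', hsr, smul_sub, ← smul_assoc,
      real_smul, ofReal_mul]
  rw [opticalPotential_heffEta hHS, PosDef.fromBlocks₂₂ _ _ hD, hSchur, posSemidef_smul_iff hs]
  exact ⟨Iff.rfl, hHS.posSemidef_sub_smul_one_iff r⟩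

/-- The optical potential `V = (i/2)(H_eff^η − (H_eff^η)†)` is positive
semidefinite if and only if `H_S^(r) − (η/4)(Σ_j g_j²/γ_j) I_N` is positive semidefinite,
i.e. iff every eigenvalue `E_α` of `H_S^(r)` satisfies `E_α ≥ (η/4) Σ_j g_j²/γ_j`. -/
theorem markovian_dilation_condition_ohmic_plus_lorentz
    (N K : ℕ) (hN : 0 < N) (hK : 0 < K) (η : ℝ) (hη : 0 < η)
    (HS : Matrix (Fin N) (Fin N) ℂ) (hHS : HS.IsHermitian)
    (g γ ε : Fin K → ℝ) (hg : ∀ j, 0 < g j) (hγ : ∀ j, 0 < γ j)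
    (V : Matrix (Fin N ⊕ Fin K × Fin N) (Fin N ⊕ Fin K × Fin N) ℂ)
    (hV : V = (Complex.I / 2) • (HeffEta N K η HS g γ ε - (HeffEta N K η HS g γ ε)ᴴ)) :
    (V.PosSemidef ↔
      (HS - (((η / 4) * ∑ j, (g j) ^ 2 / (γ j) : ℝ) : ℂ) •
        (1 : Matrix (Fin N) (Fin N) ℂ)).PosSemidef) ∧
    (V.PosSemidef ↔
      ∀ α : Fin N, (η / 4) * ∑ j, (g j) ^ 2 / (γ j) ≤ hHS.eigenvalues α) :=
  markovian_dilation_condition_ohmic_plus_lorentz_general N K η hη HS hHS g γ ε hγ V hV
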